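/- In a strong solution P (over Φ_M ∪ 𝒦) to the encoded Minsky sequent, any vertex w whose OUT contains the literal κₘ has all descendant edges labelled by Horn implications from 𝒦ₘ only, and the terminal descendant w' satisfies OUT(P,W₀,w') ≅ l₀ ⊗ rₘ^{aₘ} where aₘ is the multiplicity of rₘ at w; since strong solutions require OUT at leaves to equal l₀, it follows that aₘ = 0. -/

import Mathlib

/-- Simple products of positive literals over `α`, represented as multisets of literals. -/
abbrev SP (α : Type) := Multiset α

/-- Horn implications `X ⊸ Y` and ⊕-Horn implications `X ⊸ (Y₁ ⊕ Y₂)`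
over simple products. -/
inductive HF (α : Type) : Type
  | horn : SP α → SP α → HF α
  | ohorn : SP α → SP α → SP α → HF α

instance {α : Type} [DecidableEq α] : DecidableEq (HF α)
  | HF.horn a b, HF.horn c d =>
      decidable_of_iff (a = c ∧ b = d) (by simp [HF.horn.injEq])
  | HF.horn _ _, HF.ohorn _ _ _ => isFalse (by simp)
  | HF.ohorn _ _ _, HF.horn _ _ => isFalse (by simp)
  | HF.ohorn a b c, HF.ohorn d e f =>
      decidable_of_iff (a = d ∧ b = e ∧ c = f) (by simp [HF.ohorn.injEq])

/-- Tree-like Horn programs: rooted binary trees whose edges are labelled by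
Horn implications; a divergent vertex carries two Horn implications with a
common antecedent `X` (coming from the ⊕-Horn implication `X ⊸ (Y₁ ⊕ Y₂)`). -/
inductive HT (α : Type) : Type
  | leaf : HT α
  | node1 : SP α → SP α → HT α → HT α
  | node2 : SP α → SP α → SP α → HT α → HT α → HT α

/-- `Sol P W Δ Γ Z`: the tree-like Horn program `P` is a strong solution to the
Horn sequent `W, Δ, !Γ ⊢ Z`: every strong-computation value is defined, every
leaf value equals `Z` (as a multiset), every formula used on an edge is drawn
from `Δ` or `Γ`, and on each root-to-leaf path each formula of the linear part
`Δ` is used exactly once (the formula used on the two edges of a divergent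
vertex being the ⊕-Horn implication `X ⊸ (Y₁ ⊕ Y₂)`). -/
def Sol {α : Type} [DecidableEq α] :
    HT α → SP α → Multiset (HF α) → Multiset (HF α) → SP α → Prop
  | HT.leaf, W, Δ, _, Z => W = Z ∧ Δ = 0
  | HT.node1 X Y t, W, Δ, Γ, Z =>
      X ≠ 0 ∧ Y ≠ 0 ∧ X ≤ W ∧
      ((HF.horn X Y ∈ Δ ∧ Sol t (W - X + Y) (Δ.erase (HF.horn X Y)) Γ Z) ∨
       (HF.horn X Y ∈ Γ ∧ Sol t (W - X + Y) Δ Γ Z))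
  | HT.node2 X Y₁ Y₂ t₁ t₂, W, Δ, Γ, Z =>
      X ≠ 0 ∧ Y₁ ≠ 0 ∧ Y₂ ≠ 0 ∧ X ≤ W ∧
      ((HF.ohorn X Y₁ Y₂ ∈ Δ ∧
          Sol t₁ (W - X + Y₁) (Δ.erase (HF.ohorn X Y₁ Y₂)) Γ Z ∧
          Sol t₂ (W - X + Y₂) (Δ.erase (HF.ohorn X Y₁ Y₂)) Γ Z) ∨
       (HF.ohorn X Y₁ Y₂ ∈ Γ ∧
          Sol t₁ (W - X + Y₁) Δ Γ Z ∧
          Sol t₂ (W - X + Y₂) Δ Γ Z))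

/-- The strong-computation value `OUT(P, W, v)` at the vertex addressed by the
path `p` (at a divergent vertex, `false` selects the first child and `true`
the second; a non-divergent vertex is descended by `false`).  `none` means
undefined. -/
def OUT {α : Type} [DecidableEq α] :
    HT α → SP α → List Bool → Option (SP α)
  | _, W, [] => some W
  | HT.leaf, _, _ :: _ => none
  | HT.node1 X Y t, W, false :: p =>
      if X ≤ W then OUT t (W - X + Y) p else none
  | HT.node1 _ _ _, _, true :: _ => none
  | HT.node2 X Y₁ _ t₁ _, W, false :: p =>
      if X ≤ W then OUT t₁ (W - X + Y₁) p else none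
  | HT.node2 X _ Y₂ _ t₂, W, true :: p =>
      if X ≤ W then OUT t₂ (W - X + Y₂) p else none

/-- Literals of the Minsky encoding: `lab i` for the label `Lᵢ`, `reg m` for
the `m`-th counter, and `kap m` for the killer literal `κₘ`. -/
inductive Lit (n : ℕ) : Type
  | lab : ℕ → Lit n
  | reg : Fin n → Lit n
  | kap : Fin n → Lit n
deriving DecidableEq

/-- Instructions of an `n`-counter Minsky machine:
`inc i m j` is `Lᵢ: xₘ := xₘ + 1; goto Lⱼ`,
`dec i m j` is `Lᵢ: xₘ := xₘ - 1; goto Lⱼ`,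
`pos i m j` is `Lᵢ: if xₘ > 0 then goto Lⱼ`,
`zero i m j` is `Lᵢ: if xₘ = 0 then goto Lⱼ`
(the halt instruction is `L₀: halt`, i.e. label `0` carries no instruction). -/
inductive Instr (n : ℕ) : Type
  | inc : ℕ → Fin n → ℕ → Instr n
  | dec : ℕ → Fin n → ℕ → Instr n
  | pos : ℕ → Fin n → ℕ → Instr n
  | zero : ℕ → Fin n → ℕ → Instr n
deriving DecidableEq

/-- The source label of an instruction. -/
def Instr.src {n : ℕ} : Instr n → ℕ
  | Instr.inc i _ _ => i
  | Instr.dec i _ _ => i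
  | Instr.pos i _ _ => i
  | Instr.zero i _ _ => i

/-- A configuration: the current label together with the counter contents. -/
abbrev Config (n : ℕ) := ℕ × (Fin n → ℕ)

/-- One move of the Minsky machine with program `M`. -/
inductive MStep {n : ℕ} (M : List (Instr n)) : Config n → Config n → Prop
  | inc {i : ℕ} {m : Fin n} {j : ℕ} {c : Fin n → ℕ} :
      Instr.inc i m j ∈ M → MStep M (i, c) (j, Function.update c m (c m + 1))
  | dec {i : ℕ} {m : Fin n} {j : ℕ} {c : Fin n → ℕ} :
      Instr.dec i m j ∈ M → 0 < c m →
      MStep M (i, c) (j, Function.update c m (c m - 1))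
  | pos {i : ℕ} {m : Fin n} {j : ℕ} {c : Fin n → ℕ} :
      Instr.pos i m j ∈ M → 0 < c m → MStep M (i, c) (j, c)
  | zero {i : ℕ} {m : Fin n} {j : ℕ} {c : Fin n → ℕ} :
      Instr.zero i m j ∈ M → c m = 0 → MStep M (i, c) (j, c)

/-- `M` can go from one configuration to another (by a finite computation). -/
def Reaches {n : ℕ} (M : List (Instr n)) : Config n → Config n → Prop :=
  Relation.ReflTransGen (MStep M)

/-- The encoding of a configuration `(L, c₁, …, cₙ)` as the multiset of
literals `{l} ∪ {r₁ repeated c₁ times} ∪ … ∪ {rₙ repeated cₙ times}`. -/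
def encC {n : ℕ} (K : Config n) : Multiset (Lit n) :=
  Lit.lab K.1 ::ₘ (Finset.univ.sum fun m : Fin n =>
    Multiset.replicate (K.2 m) (Lit.reg m))

/-- The (⊕-)Horn implication `φ_I` axiomatizing an instruction `I`:
`φ₍₁₎ = lᵢ ⊸ (lⱼ ⊗ rₘ)`, `φ₍₂₎ = (lᵢ ⊗ rₘ) ⊸ lⱼ`,
`φ₍₃₎ = (lᵢ ⊗ rₘ) ⊸ (lⱼ ⊗ rₘ)`, `φ₍₄₎ = lᵢ ⊸ (lⱼ ⊕ κₘ)`. -/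
def phiHF {n : ℕ} : Instr n → HF (Lit n)
  | Instr.inc i m j => HF.horn {Lit.lab i} {Lit.lab j, Lit.reg m}
  | Instr.dec i m j => HF.horn {Lit.lab i, Lit.reg m} {Lit.lab j}
  | Instr.pos i m j => HF.horn {Lit.lab i, Lit.reg m} {Lit.lab j, Lit.reg m}
  | Instr.zero i m j => HF.ohorn {Lit.lab i} {Lit.lab j} {Lit.kap m}

/-- The multiset `Φ_M` of Horn implications axiomatizing the program of `M`. -/
def PhiHF {n : ℕ} (M : List (Instr n)) : Multiset (HF (Lit n)) :=
  (M.map phiHF : List (HF (Lit n)))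

/-- The multiset `𝒦ₘ`: the implication `κₘ ⊸ l₀` together with the killing
implications `(κₘ ⊗ rᵢ) ⊸ κₘ` for `i ≠ m`. -/
def KHFm {n : ℕ} (m : Fin n) : Multiset (HF (Lit n)) :=
  HF.horn {Lit.kap m} {Lit.lab 0} ::ₘ
    ((Finset.univ.erase m).val.map fun i : Fin n =>
      HF.horn {Lit.kap m, Lit.reg i} {Lit.kap m})

/-- The multiset `𝒦 = ⋃ₘ 𝒦ₘ`. -/
def KHF (n : ℕ) : Multiset (HF (Lit n)) :=
  Finset.univ.sum fun m : Fin n => KHFm m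

/-- The subtree of a program rooted at the vertex addressed by path `p`. -/
def subtreeAt {α : Type} : HT α → List Bool → Option (HT α)
  | t, [] => some t
  | HT.leaf, _ :: _ => none
  | HT.node1 _ _ t, false :: p => subtreeAt t p
  | HT.node1 _ _ _, true :: _ => none
  | HT.node2 _ _ _ t₁ _, false :: p => subtreeAt t₁ p
  | HT.node2 _ _ _ _ t₂, true :: p => subtreeAt t₂ p

/-- `p` addresses a terminal (output) vertex of the program. -/
def IsLeafPath {α : Type} (t : HT α) (p : List Bool) : Prop :=
  subtreeAt t p = some HT.leaf

/-- The set of (antecedent, consequent) pairs of the Horn implications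
labelling the edges of a program. -/
def edgePairs {α : Type} : HT α → Set (SP α × SP α)
  | HT.leaf => ∅
  | HT.node1 X Y t => insert (X, Y) (edgePairs t)
  | HT.node2 X Y₁ Y₂ t₁ t₂ =>
      insert (X, Y₁) (insert (X, Y₂) (edgePairs t₁ ∪ edgePairs t₂))

/-- A literal is a counter literal `rᵢ`. -/
def isReg {n : ℕ} : Lit n → Bool
  | Lit.reg _ => true
  | _ => false

/-- The (antecedent, consequent) pairs of the Horn implications of `𝒦ₘ`:
`κₘ ⊸ l₀` and `(κₘ ⊗ rᵢ) ⊸ κₘ` for `i ≠ m`. -/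
def KPairs {n : ℕ} (m : Fin n) : Set (SP (Lit n) × SP (Lit n)) := fun pr =>
  pr = ({Lit.kap m}, {Lit.lab 0}) ∨
  ∃ i : Fin n, i ≠ m ∧ pr = ({Lit.kap m, Lit.reg i}, {Lit.kap m})

section KappaAux

variable {n : ℕ}

@[simp] lemma isReg_lab (i : ℕ) : isReg (Lit.lab i : Lit n) = false := rfl
@[simp] lemma isReg_kap (m : Fin n) : isReg (Lit.kap m) = false := rfl
@[simp] lemma isReg_reg (i : Fin n) : isReg (Lit.reg i) = true := rfl

/-- Predicate: the literal is not a register literal. -/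
def nrP {n : ℕ} : Lit n → Prop := fun a => isReg a = false

instance : DecidablePred (nrP (n := n)) := fun _ => inferInstanceAs (Decidable (_ = _))

lemma sol_out {α : Type} [DecidableEq α] :
    ∀ (t : HT α) (W : SP α) (Δ Γ : Multiset (HF α)) (Z : SP α) (q : List Bool),
      Sol t W Δ Γ Z → IsLeafPath t q → OUT t W q = some Z := by
  intro t
  induction t with
  | leaf =>
    intro W Δ Γ Z q h hq
    cases q with
    | nil => obtain ⟨h1, -⟩ := h; simp [OUT, h1]
    | cons b q => simp [IsLeafPath, subtreeAt] at hq
  | node1 X Y t ih =>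
    intro W Δ Γ Z q h hq
    obtain ⟨-, -, hXW, h⟩ := h
    cases q with
    | nil => simp [IsLeafPath, subtreeAt] at hq
    | cons b q =>
      cases b with
      | false =>
        have hq' : IsLeafPath t q := hq
        rcases h with ⟨-, hs⟩ | ⟨-, hs⟩ <;>
          · simp only [OUT, if_pos hXW]
            exact ih _ _ _ _ _ hs hq'
      | true => simp [IsLeafPath, subtreeAt] at hq
  | node2 X Y₁ Y₂ t₁ t₂ ih₁ ih₂ =>
    intro W Δ Γ Z q h hq
    obtain ⟨-, -, -, hXW, h⟩ := h
    cases q with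
    | nil => simp [IsLeafPath, subtreeAt] at hq
    | cons b q =>
      cases b with
      | false =>
        have hq' : IsLeafPath t₁ q := hq
        rcases h with ⟨-, hs, -⟩ | ⟨-, hs, -⟩ <;>
          · simp only [OUT, if_pos hXW]
            exact ih₁ _ _ _ _ _ hs hq'
      | true =>
        have hq' : IsLeafPath t₂ q := hq
        rcases h with ⟨-, -, hs⟩ | ⟨-, -, hs⟩ <;>
          · simp only [OUT, if_pos hXW]
            exact ih₂ _ _ _ _ _ hs hq'

lemma sol_subtree {α : Type} [DecidableEq α] :
    ∀ (p : List Bool) (t : HT α) (W : SP α) (Γ : Multiset (HF α)) (Z : SP α)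
      (t' : HT α) (U : SP α),
      Sol t W 0 Γ Z → subtreeAt t p = some t' → OUT t W p = some U →
      Sol t' U 0 Γ Z := by
  intro p
  induction p with
  | nil =>
    intro t W Γ Z t' U h hsub hout
    simp only [subtreeAt, Option.some_inj] at hsub
    simp only [OUT, Option.some_inj] at hout
    subst hsub; subst hout; exact h
  | cons b p ih =>
    intro t W Γ Z t' U h hsub hout
    cases t with
    | leaf => simp [subtreeAt] at hsub
    | node1 X Y t =>
      obtain ⟨-, -, hXW, h⟩ := h
      rcases h with ⟨hm, -⟩ | ⟨-, hs⟩
      · exact absurd hm (Multiset.notMem_zero _)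
      cases b with
      | false =>
        simp only [subtreeAt] at hsub
        simp only [OUT, if_pos hXW] at hout
        exact ih _ _ _ _ _ _ hs hsub hout
      | true => simp [subtreeAt] at hsub
    | node2 X Y₁ Y₂ t₁ t₂ =>
      obtain ⟨-, -, -, hXW, h⟩ := h
      rcases h with ⟨hm, -, -⟩ | ⟨-, hs₁, hs₂⟩
      · exact absurd hm (Multiset.notMem_zero _)
      cases b with
      | false =>
        simp only [subtreeAt] at hsub
        simp only [OUT, if_pos hXW] at hout
        exact ih _ _ _ _ _ _ hs₁ hsub hout
      | true =>
        simp only [subtreeAt] at hsub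
        simp only [OUT, if_pos hXW] at hout
        exact ih _ _ _ _ _ _ hs₂ hsub hout

lemma horn_cases {M : List (Instr n)} (hSrc : ∀ I ∈ M, 1 ≤ I.src)
    {X Y : SP (Lit n)} (h : HF.horn X Y ∈ PhiHF M + KHF n) :
    (∃ (i : ℕ) (r : Fin n) (j : ℕ),
        X = {Lit.lab i} ∧ Y = {Lit.lab j, Lit.reg r} ∧ 1 ≤ i) ∨
    (∃ (i : ℕ) (r : Fin n) (j : ℕ),
        X = {Lit.lab i, Lit.reg r} ∧ Y = {Lit.lab j} ∧ 1 ≤ i) ∨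
    (∃ (i : ℕ) (r : Fin n) (j : ℕ),
        X = {Lit.lab i, Lit.reg r} ∧ Y = {Lit.lab j, Lit.reg r} ∧ 1 ≤ i) ∨
    (∃ m' : Fin n, X = {Lit.kap m'} ∧ Y = {Lit.lab 0}) ∨
    (∃ (m' i : Fin n), i ≠ m' ∧ X = {Lit.kap m', Lit.reg i} ∧ Y = {Lit.kap m'}) := by
  rw [Multiset.mem_add] at h
  rcases h with h | h
  · rw [PhiHF, Multiset.mem_coe, List.mem_map] at h
    obtain ⟨I, hIM, hI⟩ := h
    have hs := hSrc I hIM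
    cases I with
    | inc i r j =>
      simp only [phiHF, HF.horn.injEq] at hI
      exact Or.inl ⟨i, r, j, hI.1.symm, hI.2.symm, hs⟩
    | dec i r j =>
      simp only [phiHF, HF.horn.injEq] at hI
      exact Or.inr (Or.inl ⟨i, r, j, hI.1.symm, hI.2.symm, hs⟩)
    | pos i r j =>
      simp only [phiHF, HF.horn.injEq] at hI
      exact Or.inr (Or.inr (Or.inl ⟨i, r, j, hI.1.symm, hI.2.symm, hs⟩))
    | zero i r j => simp [phiHF] at hI
  · rw [KHF, Multiset.mem_sum] at h
    obtain ⟨m', -, h⟩ := h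
    rw [KHFm, Multiset.mem_cons] at h
    rcases h with h | h
    · obtain ⟨h1, h2⟩ := HF.horn.inj h.symm
      exact Or.inr (Or.inr (Or.inr (Or.inl ⟨m', h1.symm, h2.symm⟩)))
    · rw [Multiset.mem_map] at h
      obtain ⟨i, hi, heq⟩ := h
      rw [Finset.mem_val, Finset.mem_erase] at hi
      obtain ⟨h1, h2⟩ := HF.horn.inj heq
      exact Or.inr (Or.inr (Or.inr (Or.inr ⟨m', i, hi.1, h1.symm, h2.symm⟩)))

lemma ohorn_cases {M : List (Instr n)} (hSrc : ∀ I ∈ M, 1 ≤ I.src)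
    {X Y₁ Y₂ : SP (Lit n)} (h : HF.ohorn X Y₁ Y₂ ∈ PhiHF M + KHF n) :
    ∃ (i : ℕ) (r : Fin n) (j : ℕ),
      X = {Lit.lab i} ∧ Y₁ = {Lit.lab j} ∧ Y₂ = {Lit.kap r} ∧ 1 ≤ i := by
  rw [Multiset.mem_add] at h
  rcases h with h | h
  · rw [PhiHF, Multiset.mem_coe, List.mem_map] at h
    obtain ⟨I, hIM, hI⟩ := h
    have hs := hSrc I hIM
    cases I with
    | inc i r j => simp [phiHF] at hI
    | dec i r j => simp [phiHF] at hI
    | pos i r j => simp [phiHF] at hI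
    | zero i r j =>
      simp only [phiHF, HF.ohorn.injEq] at hI
      exact ⟨i, r, j, hI.1.symm, hI.2.1.symm, hI.2.2.symm, hs⟩
  · rw [KHF, Multiset.mem_sum] at h
    obtain ⟨m', -, h⟩ := h
    rw [KHFm, Multiset.mem_cons] at h
    rcases h with h | h
    · exact absurd h (by simp)
    · rw [Multiset.mem_map] at h
      obtain ⟨i, -, heq⟩ := h
      exact absurd heq (by simp)

lemma countP_step {p : Lit n → Prop} [DecidablePred p] {W X Y : SP (Lit n)}
    (h : X ≤ W) :
    Multiset.countP p (W - X + Y) =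
      Multiset.countP p W - Multiset.countP p X + Multiset.countP p Y := by
  obtain ⟨ZZ, rfl⟩ := Multiset.le_iff_exists_add.mp h
  rw [add_tsub_cancel_left]
  rw [Multiset.countP_add, Multiset.countP_add]
  omega

lemma sol_state_count {M : List (Instr n)} (hSrc : ∀ I ∈ M, 1 ≤ I.src) :
    ∀ (t : HT (Lit n)) (W : SP (Lit n)),
      Sol t W 0 (PhiHF M + KHF n) {Lit.lab 0} →
      Multiset.countP nrP W = 1 := by
  intro t
  induction t with
  | leaf =>
    intro W h
    obtain ⟨h1, -⟩ := h
    subst h1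
    simp [nrP, Multiset.insert_eq_cons, ← Multiset.cons_zero, Multiset.countP_cons]
  | node1 X Y t ih =>
    intro W h
    obtain ⟨-, -, hXW, h⟩ := h
    rcases h with ⟨hm, -⟩ | ⟨hm, hs⟩
    · exact absurd hm (Multiset.notMem_zero _)
    have h2 := ih _ hs
    rw [countP_step hXW] at h2
    have hXle : Multiset.countP nrP X ≤ Multiset.countP nrP W :=
      Multiset.countP_le_of_le _ hXW
    have hc : Multiset.countP nrP X = 1 ∧ Multiset.countP nrP Y = 1 := by
      rcases horn_cases hSrc hm with
        ⟨i, r, j, rfl, rfl, -⟩ | ⟨i, r, j, rfl, rfl, -⟩ |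
        ⟨i, r, j, rfl, rfl, -⟩ | ⟨m', rfl, rfl⟩ | ⟨m', i, -, rfl, rfl⟩ <;>
        constructor <;> simp [nrP, Multiset.insert_eq_cons, ← Multiset.cons_zero, Multiset.countP_cons]
    omega
  | node2 X Y₁ Y₂ t₁ t₂ ih₁ ih₂ =>
    intro W h
    obtain ⟨-, -, -, hXW, h⟩ := h
    rcases h with ⟨hm, -, -⟩ | ⟨hm, hs₁, -⟩
    · exact absurd hm (Multiset.notMem_zero _)
    have h2 := ih₁ _ hs₁
    rw [countP_step hXW] at h2
    have hXle : Multiset.countP nrP X ≤ Multiset.countP nrP W :=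
      Multiset.countP_le_of_le _ hXW
    obtain ⟨i, r, j, rfl, rfl, -, -⟩ := ohorn_cases hSrc hm
    have hc1 : Multiset.countP nrP ({Lit.lab i} : SP (Lit n)) = 1 := by
      simp [nrP, Multiset.insert_eq_cons, ← Multiset.cons_zero, Multiset.countP_cons]
    have hc2 : Multiset.countP nrP ({Lit.lab j} : SP (Lit n)) = 1 := by
      simp [nrP, Multiset.insert_eq_cons, ← Multiset.cons_zero, Multiset.countP_cons]
    omega

lemma after_l0 {M : List (Instr n)} (hSrc : ∀ I ∈ M, 1 ≤ I.src) :
    ∀ (t : HT (Lit n)) (R : Multiset (Lit n)),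
      (∀ a ∈ R, isReg a = true) →
      Sol t (Lit.lab 0 ::ₘ R) 0 (PhiHF M + KHF n) {Lit.lab 0} →
      t = HT.leaf ∧ R = 0 := by
  intro t R hR h
  have hmemW : ∀ a : Lit n, a ∈ Lit.lab 0 ::ₘ R → a = Lit.lab 0 ∨ isReg a = true := by
    intro a ha
    rcases Multiset.mem_cons.mp ha with h1 | h1
    · exact Or.inl h1
    · exact Or.inr (hR a h1)
  cases t with
  | leaf =>
    obtain ⟨h1, -⟩ := h
    refine ⟨rfl, ?_⟩
    have := Multiset.cons_inj_right (Lit.lab 0) (s := R) (t := 0)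
    exact this.mp (by simpa using h1)
  | node1 X Y t =>
    obtain ⟨-, -, hXW, h⟩ := h
    rcases h with ⟨hm, -⟩ | ⟨hm, -⟩
    · exact absurd hm (Multiset.notMem_zero _)
    exfalso
    rcases horn_cases hSrc hm with
      ⟨i, r, j, rfl, -, hi⟩ | ⟨i, r, j, rfl, -, hi⟩ |
      ⟨i, r, j, rfl, -, hi⟩ | ⟨m', rfl, -⟩ | ⟨m', i, -, rfl, -⟩
    · have : (Lit.lab i : Lit n) ∈ Lit.lab 0 ::ₘ R :=
        Multiset.mem_of_le hXW (Multiset.mem_singleton_self _)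
      rcases hmemW _ this with h1 | h1
      · have : i = 0 := by injection h1
        omega
      · simp at h1
    · have : (Lit.lab i : Lit n) ∈ Lit.lab 0 ::ₘ R :=
        Multiset.mem_of_le hXW (by simp)
      rcases hmemW _ this with h1 | h1
      · have : i = 0 := by injection h1
        omega
      · simp at h1
    · have : (Lit.lab i : Lit n) ∈ Lit.lab 0 ::ₘ R :=
        Multiset.mem_of_le hXW (by simp)
      rcases hmemW _ this with h1 | h1
      · have : i = 0 := by injection h1
        omega
      · simp at h1
    · have : (Lit.kap m' : Lit n) ∈ Lit.lab 0 ::ₘ R :=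
        Multiset.mem_of_le hXW (Multiset.mem_singleton_self _)
      rcases hmemW _ this with h1 | h1
      · exact absurd h1 (by simp)
      · simp at h1
    · have : (Lit.kap m' : Lit n) ∈ Lit.lab 0 ::ₘ R :=
        Multiset.mem_of_le hXW (by simp)
      rcases hmemW _ this with h1 | h1
      · exact absurd h1 (by simp)
      · simp at h1
  | node2 X Y₁ Y₂ t₁ t₂ =>
    obtain ⟨-, -, -, hXW, h⟩ := h
    rcases h with ⟨hm, -, -⟩ | ⟨hm, -, -⟩
    · exact absurd hm (Multiset.notMem_zero _)
    exfalso
    obtain ⟨i, r, j, rfl, -, -, hi⟩ := ohorn_cases hSrc hm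
    have : (Lit.lab i : Lit n) ∈ Lit.lab 0 ::ₘ R :=
      Multiset.mem_of_le hXW (Multiset.mem_singleton_self _)
    rcases hmemW _ this with h1 | h1
    · have : i = 0 := by injection h1
      omega
    · simp at h1

lemma kappa_main {M : List (Instr n)} (hSrc : ∀ I ∈ M, 1 ≤ I.src) (m : Fin n) :
    ∀ (t : HT (Lit n)) (R : Multiset (Lit n)),
      (∀ a ∈ R, isReg a = true) →
      Sol t (Lit.kap m ::ₘ R) 0 (PhiHF M + KHF n) {Lit.lab 0} →
      edgePairs t ⊆ KPairs m ∧ R.count (Lit.reg m) = 0 := by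
  intro t
  induction t with
  | leaf =>
    intro R hR h
    obtain ⟨h1, -⟩ := h
    exfalso
    have : (Lit.kap m : Lit n) ∈ ({Lit.lab 0} : Multiset (Lit n)) := by
      rw [← h1]; exact Multiset.mem_cons_self _ _
    simp at this
  | node1 X Y t ih =>
    intro R hR h
    obtain ⟨-, -, hXW, h⟩ := h
    rcases h with ⟨hm, -⟩ | ⟨hm, hs⟩
    · exact absurd hm (Multiset.notMem_zero _)
    have hmemW : ∀ a : Lit n, a ∈ Lit.kap m ::ₘ R → a = Lit.kap m ∨ isReg a = true := by
      intro a ha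
      rcases Multiset.mem_cons.mp ha with h1 | h1
      · exact Or.inl h1
      · exact Or.inr (hR a h1)
    rcases horn_cases hSrc hm with
      ⟨i, r, j, rfl, -, hi⟩ | ⟨i, r, j, rfl, -, hi⟩ |
      ⟨i, r, j, rfl, -, hi⟩ | ⟨m', hXe, hYe⟩ | ⟨m', i, him, hXe, hYe⟩
    · exfalso
      have : (Lit.lab i : Lit n) ∈ Lit.kap m ::ₘ R :=
        Multiset.mem_of_le hXW (Multiset.mem_singleton_self _)
      rcases hmemW _ this with h1 | h1
      · exact absurd h1 (by simp)
      · simp at h1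
    · exfalso
      have : (Lit.lab i : Lit n) ∈ Lit.kap m ::ₘ R := Multiset.mem_of_le hXW (by simp)
      rcases hmemW _ this with h1 | h1
      · exact absurd h1 (by simp)
      · simp at h1
    · exfalso
      have : (Lit.lab i : Lit n) ∈ Lit.kap m ::ₘ R := Multiset.mem_of_le hXW (by simp)
      rcases hmemW _ this with h1 | h1
      · exact absurd h1 (by simp)
      · simp at h1
    · -- the implication κ_{m'} ⊸ l₀
      have hm'm : m' = m := by
        have : (Lit.kap m' : Lit n) ∈ Lit.kap m ::ₘ R := by
          rw [hXe] at hXW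
          exact Multiset.mem_of_le hXW (Multiset.mem_singleton_self _)
        rcases hmemW _ this with h1 | h1
        · injection h1
        · simp at h1
      rw [hm'm] at hXe
      subst hXe; subst hYe
      have hU' : (Lit.kap m ::ₘ R) - {Lit.kap m} + {Lit.lab 0} = Lit.lab 0 ::ₘ R := by
        rw [Multiset.sub_singleton, Multiset.erase_cons_head, add_comm,
          Multiset.singleton_add]
      rw [hU'] at hs
      obtain ⟨rfl, rfl⟩ := after_l0 hSrc t R hR hs
      constructor
      · intro pr hpr
        rcases Set.mem_insert_iff.mp hpr with h1 | h1
        · exact Or.inl h1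
        · exact absurd h1 (by simp [edgePairs])
      · simp
    · -- the killing implication (κ_{m'} ⊗ r_i) ⊸ κ_{m'}
      have hm'm : m' = m := by
        have : (Lit.kap m' : Lit n) ∈ Lit.kap m ::ₘ R := by
          rw [hXe] at hXW
          exact Multiset.mem_of_le hXW (by simp)
        rcases hmemW _ this with h1 | h1
        · injection h1
        · simp at h1
      rw [hm'm] at hXe hYe him
      have hri : (Lit.reg i : Lit n) ∈ R := by
        have h1 : (Lit.reg i : Lit n) ∈ Lit.kap m ::ₘ R := by
          rw [hXe] at hXW
          exact Multiset.mem_of_le hXW (by simp)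
        rcases Multiset.mem_cons.mp h1 with h2 | h2
        · exact absurd h2 (by simp)
        · exact h2
      subst hXe; subst hYe
      have hU' : (Lit.kap m ::ₘ R) - {Lit.kap m, Lit.reg i} + {Lit.kap m} =
          Lit.kap m ::ₘ R.erase (Lit.reg i) := by
        have h1 : ({Lit.kap m, Lit.reg i} : Multiset (Lit n)) =
            Lit.kap m ::ₘ {Lit.reg i} := rfl
        rw [h1, Multiset.sub_cons, Multiset.erase_cons_head,
          Multiset.sub_singleton, add_comm, Multiset.singleton_add]
      rw [hU'] at hs
      have hR' : ∀ a ∈ R.erase (Lit.reg i), isReg a = true := fun a ha =>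
        hR a (Multiset.mem_of_mem_erase ha)
      obtain ⟨hsub, hcnt⟩ := ih _ hR' hs
      constructor
      · intro pr hpr
        rcases Set.mem_insert_iff.mp hpr with h1 | h1
        · exact Or.inr ⟨i, him, h1⟩
        · exact hsub h1
      · have hne : (Lit.reg m : Lit n) ≠ Lit.reg i := by
          intro hcon
          exact him (Lit.reg.inj hcon).symm
        rw [Multiset.count_erase_of_ne hne] at hcnt
        exact hcnt
  | node2 X Y₁ Y₂ t₁ t₂ ih₁ ih₂ =>
    intro R hR h
    obtain ⟨-, -, -, hXW, h⟩ := h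
    rcases h with ⟨hm, -, -⟩ | ⟨hm, -, -⟩
    · exact absurd hm (Multiset.notMem_zero _)
    exfalso
    obtain ⟨i, r, j, rfl, -, -, -⟩ := ohorn_cases hSrc hm
    have h1 : (Lit.lab i : Lit n) ∈ Lit.kap m ::ₘ R :=
      Multiset.mem_of_le hXW (Multiset.mem_singleton_self _)
    rcases Multiset.mem_cons.mp h1 with h2 | h2
    · exact absurd h2 (by simp)
    · have := hR _ h2
      simp at this

end KappaAux

/-- in a strong solution `P` (over `Φ_M ∪ 𝒦`) to the encoded
Minsky sequent, any vertex `w` whose value contains the literal `κₘ` has all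
descendant edges labelled by Horn implications from `𝒦ₘ` only, and every
terminal descendant `w'` satisfies `OUT(P, W₀, w') ≅ l₀ ⊗ rₘ^{aₘ}` where
`aₘ` is the multiplicity of `rₘ` at `w`; since leaf values must equal `l₀`,
it follows that `aₘ = 0`. -/
theorem kappa_kills {n : ℕ} (M : List (Instr n)) (k : Fin n → ℕ)
    (m : Fin n) (P : HT (Lit n))
    (hSrc : ∀ I ∈ M, 1 ≤ I.src)
    (hSol : Sol P (encC (1, k)) 0 (PhiHF M + KHF n) {Lit.lab 0}) :
    ∀ (p : List Bool) (t' : HT (Lit n)) (U : Multiset (Lit n)),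
      subtreeAt P p = some t' →
      OUT P (encC (1, k)) p = some U →
      Lit.kap m ∈ U →
      edgePairs t' ⊆ KPairs m ∧
      (∀ q : List Bool, IsLeafPath t' q →
        OUT t' U q =
          some (Lit.lab 0 ::ₘ
            Multiset.replicate (U.count (Lit.reg m)) (Lit.reg m))) ∧
      U.count (Lit.reg m) = 0 := by
  intro p t' U hsub hout hkap
  have hsol' := sol_subtree p P (encC (1, k)) _ _ t' U hSol hsub hout
  have hcp : Multiset.countP nrP U = 1 := sol_state_count hSrc t' U hsol'
  have hFilt : U.filter nrP = {Lit.kap m} := by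
    have hcard : Multiset.card (U.filter nrP) = 1 := by
      rw [← Multiset.countP_eq_card_filter]; exact hcp
    obtain ⟨b, hb⟩ := Multiset.card_eq_one.mp hcard
    have hmemf : Lit.kap m ∈ U.filter nrP :=
      Multiset.mem_filter.mpr ⟨hkap, by simp [nrP, isReg]⟩
    rw [hb] at hmemf ⊢
    rw [Multiset.mem_singleton] at hmemf
    rw [hmemf]
  have hcntk : U.count (Lit.kap m) = 1 := by
    have h2 : (U.filter nrP).count (Lit.kap m) = 1 := by rw [hFilt]; simp
    rw [Multiset.count_filter] at h2
    simpa [nrP, isReg] using h2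
  set R := U.erase (Lit.kap m) with hRdef
  have hUR : U = Lit.kap m ::ₘ R := (Multiset.cons_erase hkap).symm
  have hRreg : ∀ a ∈ R, isReg a = true := by
    intro a ha
    by_contra hcon
    have ha' : nrP a := by
      rw [Bool.not_eq_true] at hcon
      exact hcon
    have haU : a ∈ U := Multiset.mem_of_mem_erase ha
    have hmf : a ∈ U.filter nrP := Multiset.mem_filter.mpr ⟨haU, ha'⟩
    rw [hFilt, Multiset.mem_singleton] at hmf
    subst hmf
    have hpos : 0 < R.count (Lit.kap m) := Multiset.count_pos.mpr ha
    rw [hRdef, Multiset.count_erase_self, hcntk] at hpos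
    omega
  have hsol2 := hsol'
  rw [hUR] at hsol2
  obtain ⟨hedge, hcnt⟩ := kappa_main hSrc m t' R hRreg hsol2
  have hUcnt : U.count (Lit.reg m) = 0 := by
    rw [hUR, Multiset.count_cons_of_ne (by simp), hcnt]
  refine ⟨hedge, ?_, hUcnt⟩
  intro q hq
  rw [hUcnt]
  simpa using sol_out t' U 0 _ {Lit.lab 0} q hsol' hq
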